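/- Under the stated setup, for every λ ∈ ℝ^n with Z_λ finite and every γ ∈ ℝ^n with Z_{γ+λ} finite, the incomplete-data log-likelihood difference satisfies L(γ + λ) − L(λ) ≥ ∑_{y∈𝒴} (1 + k_λ[γ·ν] − p_λ[e^{γ·ν}]). -/

import Mathlib

/- Common setup: log-linear models over proof trees (complete data X) and
   queries (incomplete data Y). -/

variable {X Y : Type*}

/-- `ν_#(x) = ∑ i, ν_i(x)`. -/
def nuSharp {n : ℕ} (ν : Fin n → X → ℕ) (x : X) : ℕ := ∑ i, ν i x

/-- weighted property sum `λ·ν(x)`. -/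
noncomputable def wdot {n : ℕ} (l : Fin n → ℝ) (ν : Fin n → X → ℕ) (x : X) : ℝ :=
  ∑ i, l i * (ν i x : ℝ)

/-- normalizing constant `Z_λ`. -/
noncomputable def Zpart (p0 : X → ℝ) {n : ℕ} (ν : Fin n → X → ℕ) (l : Fin n → ℝ) : ℝ :=
  ∑' x : X, Real.exp (wdot l ν x) * p0 x

/-- log-linear distribution `p_λ(x)`. -/
noncomputable def pLL (p0 : X → ℝ) {n : ℕ} (ν : Fin n → X → ℕ) (l : Fin n → ℝ) (x : X) : ℝ :=
  (Zpart p0 ν l)⁻¹ * Real.exp (wdot l ν x) * p0 x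

/-- incomplete-data probability `p_λ(y) = ∑_{x ∈ X(y)} p_λ(x)`. -/
noncomputable def pLLY (Yf : X → Y) (p0 : X → ℝ) {n : ℕ} (ν : Fin n → X → ℕ)
    (l : Fin n → ℝ) (y : Y) : ℝ :=
  ∑' x : {x : X // Yf x = y}, pLL p0 ν l x.1

/-- incomplete-data log-likelihood `L(λ) = ∑_{y ∈ 𝒴} ln p_λ(y)`. -/
noncomputable def LL (Yf : X → Y) (p0 : X → ℝ) {n : ℕ} (ν : Fin n → X → ℕ)
    (𝒴 : Multiset Y) (l : Fin n → ℝ) : ℝ :=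
  (𝒴.map fun y => Real.log (pLLY Yf p0 ν l y)).sum

/-- expectation `p_λ[f]`. -/
noncomputable def pExp (p0 : X → ℝ) {n : ℕ} (ν : Fin n → X → ℕ) (l : Fin n → ℝ)
    (f : X → ℝ) : ℝ :=
  ∑' x : X, pLL p0 ν l x * f x

/-- conditional expectation `k_λ[f]` given observed `y`. -/
noncomputable def kExp (Yf : X → Y) (p0 : X → ℝ) {n : ℕ} (ν : Fin n → X → ℕ)
    (l : Fin n → ℝ) (y : Y) (f : X → ℝ) : ℝ :=
  ∑' x : {x : X // Yf x = y}, (pLL p0 ν l x.1 / pLLY Yf p0 ν l y) * f x.1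

/-- auxiliary function
`A(γ,λ) = ∑_{y∈𝒴} (1 + k_λ[γ·ν] − p_λ[∑ i, ν̄_i e^{γ_i ν_#}])`. -/
noncomputable def Aaux (Yf : X → Y) (p0 : X → ℝ) {n : ℕ} (ν : Fin n → X → ℕ)
    (𝒴 : Multiset Y) (γ l : Fin n → ℝ) : ℝ :=
  (𝒴.map fun y =>
    1 + kExp Yf p0 ν l y (fun x => wdot γ ν x)
      - pExp p0 ν l (fun x =>
          ∑ i, ((ν i x : ℝ) / (nuSharp ν x : ℝ)) * Real.exp (γ i * (nuSharp ν x : ℝ)))).sum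

/-!
Factor `p_{γ+λ}(y) = p_λ(y) · k_λ[e^{γ·ν}] / p_λ[e^{γ·ν}]`. Taking logarithms, the term
`ln k_λ[e^{γ·ν}]` is at least `k_λ[γ·ν]` by Jensen's inequality for `exp` (tangent line at the
mean), and `-ln p_λ[e^{γ·ν}] ≥ 1 - p_λ[e^{γ·ν}]` by `ln t ≤ t - 1`.
-/

open Real

theorem Real.exp_tsum_mul_le_tsum_mul_exp {ι : Type*} {w g : ι → ℝ} (hw : ∀ i, 0 ≤ w i)
    (hw1 : HasSum w 1) (hwg : Summable fun i => w i * g i)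
    (hwe : Summable fun i => w i * exp (g i)) :
    exp (∑' i, w i * g i) ≤ ∑' i, w i * exp (g i) := by
  set m := ∑' i, w i * g i
  have htangent :
      HasSum (fun i => exp m * (w i + w i * g i - m * w i)) (exp m * (1 + m - m * 1)) :=
    ((hw1.add hwg.hasSum).sub (hw1.mul_left m)).mul_left _
  have hle : ∀ i, exp m * (w i + w i * g i - m * w i) ≤ w i * exp (g i) := fun i => by
    have h := mul_le_mul_of_nonneg_left (add_one_le_exp (g i - m)) (exp_pos m).le
    rw [← exp_add, add_sub_cancel] at h
    calc exp m * (w i + w i * g i - m * w i) = w i * (exp m * (g i - m + 1)) := by ring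
      _ ≤ w i * exp (g i) := mul_le_mul_of_nonneg_left h (hw i)
  simpa using hasSum_le hle htangent hwe.hasSum

section LogLinear

variable {p0 : X → ℝ} {n : ℕ} {ν : Fin n → X → ℕ} {l γ : Fin n → ℝ}

theorem wdot_add (γ l : Fin n → ℝ) (ν : Fin n → X → ℕ) (x : X) :
    wdot (γ + l) ν x = wdot γ ν x + wdot l ν x := by
  simp [wdot, add_mul, Finset.sum_add_distrib]

theorem Zpart_pos (hp0 : ∀ x, 0 < p0 x) (hZl : Summable fun x => exp (wdot l ν x) * p0 x)
    (x : X) : 0 < Zpart p0 ν l :=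
  hZl.tsum_pos (fun x => (mul_pos (exp_pos _) (hp0 x)).le) x (mul_pos (exp_pos _) (hp0 x))

theorem pLL_nonneg (hp0 : ∀ x, 0 ≤ p0 x) (x : X) : 0 ≤ pLL p0 ν l x := by
  have hZ : 0 ≤ Zpart p0 ν l := tsum_nonneg fun x => mul_nonneg (exp_pos _).le (hp0 x)
  exact mul_nonneg (mul_nonneg (inv_nonneg.2 hZ) (exp_pos _).le) (hp0 x)

theorem pLL_pos (hp0 : ∀ x, 0 < p0 x) (hZl : Summable fun x => exp (wdot l ν x) * p0 x)
    (x : X) : 0 < pLL p0 ν l x :=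
  mul_pos (mul_pos (inv_pos.2 (Zpart_pos hp0 hZl x)) (exp_pos _)) (hp0 x)

theorem summable_pLL (hZl : Summable fun x => exp (wdot l ν x) * p0 x) :
    Summable (pLL p0 ν l) :=
  (hZl.mul_left (Zpart p0 ν l)⁻¹).congr fun _ => (mul_assoc _ _ _).symm

theorem hasSum_pLL_div_pLLY (Yf : X → Y) (hZl : Summable fun x => exp (wdot l ν x) * p0 x)
    {y : Y} (hy : pLLY Yf p0 ν l y ≠ 0) :
    HasSum (fun x : {x : X // Yf x = y} => pLL p0 ν l x.1 / pLLY Yf p0 ν l y) 1 := by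
  have h : HasSum (fun x : {x : X // Yf x = y} => pLL p0 ν l x.1 / pLLY Yf p0 ν l y)
      (pLLY Yf p0 ν l y / pLLY Yf p0 ν l y) :=
    ((summable_pLL hZl).subtype {x | Yf x = y}).hasSum.div_const _
  rwa [div_self hy] at h

theorem exp_kExp_le_kExp_exp (Yf : X → Y) (hp0 : ∀ x, 0 ≤ p0 x)
    (hZl : Summable fun x => exp (wdot l ν x) * p0 x) {y : Y} (hy : 0 < pLLY Yf p0 ν l y)
    {g : X → ℝ}
    (hg : Summable fun x : {x : X // Yf x = y} => pLL p0 ν l x.1 / pLLY Yf p0 ν l y * g x.1)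
    (hge : Summable fun x : {x : X // Yf x = y} =>
      pLL p0 ν l x.1 / pLLY Yf p0 ν l y * exp (g x.1)) :
    exp (kExp Yf p0 ν l y g) ≤ kExp Yf p0 ν l y fun x => exp (g x) :=
  exp_tsum_mul_le_tsum_mul_exp (fun x => div_nonneg (pLL_nonneg hp0 x.1) hy.le)
    (hasSum_pLL_div_pLLY Yf hZl hy.ne') hg hge

theorem pExp_exp_wdot :
    pExp p0 ν l (fun x => exp (wdot γ ν x)) = Zpart p0 ν (γ + l) / Zpart p0 ν l := by
  unfold pExp pLL Zpart
  rw [div_eq_inv_mul, ← tsum_mul_left]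
  exact tsum_congr fun x => by rw [wdot_add, exp_add]; ring

theorem pLL_add (hZ : Zpart p0 ν l ≠ 0) (x : X) :
    pLL p0 ν (γ + l) x =
      pLL p0 ν l x * exp (wdot γ ν x) / pExp p0 ν l (fun x => exp (wdot γ ν x)) := by
  rw [pExp_exp_wdot]
  simp only [pLL, wdot_add, exp_add]
  field_simp

theorem pLLY_add (Yf : X → Y) (hZ : Zpart p0 ν l ≠ 0) {y : Y} (hy : pLLY Yf p0 ν l y ≠ 0) :
    pLLY Yf p0 ν (γ + l) y = pLLY Yf p0 ν l y * kExp Yf p0 ν l y (fun x => exp (wdot γ ν x)) /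
      pExp p0 ν l (fun x => exp (wdot γ ν x)) := by
  simp only [pLLY, kExp, pLL_add hZ, div_mul_eq_mul_div, tsum_div_const]
  rw [← pLLY, mul_div_cancel₀ _ hy]

theorem one_add_kExp_sub_pExp_le_log_sub_log (Yf : X → Y) (hp0 : ∀ x, 0 < p0 x)
    (hZl : Summable fun x => exp (wdot l ν x) * p0 x)
    (hpsum : Summable fun x => pLL p0 ν l x * exp (wdot γ ν x))
    {y : Y} (hy : 0 < pLLY Yf p0 ν l y)
    (hksum : Summable fun x : {x : X // Yf x = y} =>
      pLL p0 ν l x.1 / pLLY Yf p0 ν l y * wdot γ ν x.1) :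
    1 + kExp Yf p0 ν l y (fun x => wdot γ ν x) - pExp p0 ν l (fun x => exp (wdot γ ν x)) ≤
      log (pLLY Yf p0 ν (γ + l) y) - log (pLLY Yf p0 ν l y) := by
  obtain ⟨x0, -⟩ : Nonempty {x : X // Yf x = y} := by
    by_contra h
    rw [not_nonempty_iff] at h
    simp [pLLY] at hy
  have hT : 0 < pExp p0 ν l (fun x => exp (wdot γ ν x)) :=
    hpsum.tsum_pos (fun x => (mul_pos (pLL_pos hp0 hZl x) (exp_pos _)).le) x0
      (mul_pos (pLL_pos hp0 hZl x0) (exp_pos _))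
  have hjensen := exp_kExp_le_kExp_exp Yf (fun x => (hp0 x).le) hZl hy hksum
    (((hpsum.subtype {x | Yf x = y}).div_const (pLLY Yf p0 ν l y)).congr
      fun x => (div_mul_eq_mul_div _ _ _).symm)
  have hK := (exp_pos _).trans_le hjensen
  rw [pLLY_add Yf (Zpart_pos hp0 hZl x0).ne' hy.ne', log_div (by positivity) hT.ne',
    log_mul hy.ne' hK.ne']
  linarith [(le_log_iff_exp_le hK).2 hjensen, log_le_sub_one_of_pos hT]

end LogLinear

theorem loglikelihood_difference_exp_bound_general
    {X Y : Type*} (Yf : X → Y)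
    (p0 : X → ℝ) (hp0 : ∀ x, 0 < p0 x)
    {n : ℕ} (ν : Fin n → X → ℕ)
    (𝒴 : Multiset Y) (l γ : Fin n → ℝ)
    (hZl : Summable fun x : X => Real.exp (wdot l ν x) * p0 x)
    (hpos : ∀ y ∈ 𝒴, 0 < pLLY Yf p0 ν l y)
    (hksum : ∀ y ∈ 𝒴, Summable fun x : {x : X // Yf x = y} =>
      (pLL p0 ν l x.1 / pLLY Yf p0 ν l y) * wdot γ ν x.1)
    (hpsum : Summable fun x : X => pLL p0 ν l x * Real.exp (wdot γ ν x)) :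
    (𝒴.map fun y => 1 + kExp Yf p0 ν l y (fun x => wdot γ ν x)
      - pExp p0 ν l (fun x => Real.exp (wdot γ ν x))).sum ≤
    LL Yf p0 ν 𝒴 (γ + l) - LL Yf p0 ν 𝒴 l := by
  rw [LL, LL, ← Multiset.sum_map_sub]
  exact Multiset.sum_map_le_sum_map _ _ fun y hy =>
    one_add_kExp_sub_pExp_le_log_sub_log Yf hp0 hZl hpsum (hpos y hy) (hksum y hy)

/-- Lower bound on the log-likelihood difference via `ln x ≤ x − 1`:
`L(γ+λ) − L(λ) ≥ ∑_{y∈𝒴} (1 + k_λ[γ·ν] − p_λ[e^{γ·ν}])`. -/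
theorem loglikelihood_difference_exp_bound
    {X Y : Type*} [Countable X] (Yf : X → Y)
    (p0 : X → ℝ) (hp0 : ∀ x, 0 < p0 x) (hp0sum : ∑' x : X, p0 x = 1)
    {n : ℕ} (ν : Fin n → X → ℕ)
    (𝒴 : Multiset Y) (l γ : Fin n → ℝ)
    (hZl : Summable fun x : X => Real.exp (wdot l ν x) * p0 x)
    (hZgl : Summable fun x : X => Real.exp (wdot (γ + l) ν x) * p0 x)
    (hpos : ∀ y ∈ 𝒴, 0 < pLLY Yf p0 ν l y)
    (hksum : ∀ y ∈ 𝒴, Summable fun x : {x : X // Yf x = y} =>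
      (pLL p0 ν l x.1 / pLLY Yf p0 ν l y) * wdot γ ν x.1)
    (hpsum : Summable fun x : X => pLL p0 ν l x * Real.exp (wdot γ ν x)) :
    (𝒴.map fun y => 1 + kExp Yf p0 ν l y (fun x => wdot γ ν x)
      - pExp p0 ν l (fun x => Real.exp (wdot γ ν x))).sum ≤
    LL Yf p0 ν 𝒴 (γ + l) - LL Yf p0 ν 𝒴 l :=
  loglikelihood_difference_exp_bound_general Yf p0 hp0 ν 𝒴 l γ hZl hpos hksum hpsum
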